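/- arXiv:1401.0811 — 2 statements merged into one kernel-verified Lean document; each statement's English description precedes it below -/
import Mathlib

section
/- Let r, s be nonzero complex numbers with r^k s^l = 1 only for k = l = 0, and let n be a positive integer. For λ = Σ λ_i ϖ_i in the weight lattice Λ of so_{2n+1} and η, φ ∈ ℤ^n (coordinates in the simple roots), define ϱ^{0,λ}(η, φ) = (r s^{−1})^{(η+φ, λ)} where η, φ are regarded as elements of ℝ^n via η ↦ Σ η_i α_i, and define ϱ^{λ,0}(η, φ) = ϱ^λ(ω'_η ω_φ) via the pairing of type B_n. Set ϱ^{λ,μ} = ϱ^{λ,0} · ϱ^{0,μ}. If u = (η, φ) satisfies ϱ^{λ,μ}(η, φ) = 1 for all λ, μ ∈ Λ, then η = 0 and φ = 0. In particular, taking μ = ϖ_i gives (η + φ, ϖ_i) = 0 hence η_i + φ_i = 0 for all i, and then taking λ = ϖ_i gives (s²r^{−2})^{(α_i, ϖ_i) η_i} = 1 hence η_i = 0 for all i. -/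
open Finset

/-- Complex power with a rational exponent (principal branch). -/
noncomputable def zq (z : ℂ) (q : ℚ) : ℂ := z ^ (q : ℂ)

/-- `(ε_j, λ)` for `λ = Σ λ_i ϖ_i` in the weight lattice of `so_{2n+1}`
(`ϖ_i = ε_1 + ⋯ + ε_i` for `i < n`, `ϖ_n = (ε_1 + ⋯ + ε_n)/2`; 0-indexed,
rank `n+1`). -/
def epsW {n : ℕ} (lam : Fin (n+1) → ℤ) (j : Fin (n+1)) : ℚ :=
  (∑ i ∈ univ.filter (fun i => j ≤ i ∧ i ≠ Fin.last n), (lam i : ℚ))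
    + (lam (Fin.last n) : ℚ) / 2

/-- The coefficient of `α_j` when the weight `λ` is written in the simple-root
basis: `c_j = Σ_{k ≤ j} (ε_k, λ)`. -/
def alphaCoordW {n : ℕ} (lam : Fin (n+1) → ℤ) (j : Fin (n+1)) : ℚ :=
  ∑ i ∈ univ.filter (· ≤ j), epsW lam i

/-- `(ε_i, ζ)` for `ζ = Σ ζ_j α_j` in the root lattice of `B_{n+1}`. -/
def epsQ {n : ℕ} (ζ : Fin (n+1) → ℤ) (i : Fin (n+1)) : ℤ :=
  ζ i - (if h : 0 < (i : ℕ) then ζ ⟨(i : ℕ) - 1, by omega⟩ else 0)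

/-- The pairing value `⟨ω'_ζ, ω_i⟩` for `ζ` in the root lattice. -/
noncomputable def pgQ (r s : ℂ) {n : ℕ} (ζ : Fin (n+1) → ℤ) (i : Fin (n+1)) : ℂ :=
  if h : (i : ℕ) + 1 < n + 1 then
    r ^ (2 * epsQ ζ i) * s ^ (2 * epsQ ζ ⟨(i : ℕ) + 1, h⟩)
  else
    r ^ (2 * epsQ ζ i) * (r * s) ^ (-(ζ i))

/-- The pairing value `⟨ω'_λ, ω_i⟩` for `λ` in the weight lattice. -/
noncomputable def pgW (r s : ℂ) {n : ℕ} (lam : Fin (n+1) → ℤ) (i : Fin (n+1)) : ℂ :=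
  if i ≠ Fin.last n then
    zq r (2 * epsW lam i) * zq s (2 * epsW lam (i + 1))
  else
    zq r (2 * epsW lam i) * zq (r * s) (-(alphaCoordW lam (Fin.last n)))

/-- `⟨ω'_η, ω_λ⟩` for `η` in the root lattice and `λ` a weight, extended
bimultiplicatively. -/
noncomputable def pairQW (r s : ℂ) {n : ℕ} (η : Fin (n+1) → ℤ)
    (lam : Fin (n+1) → ℤ) : ℂ :=
  ∏ i : Fin (n+1), zq (pgQ r s η i) (alphaCoordW lam i)

/-- `⟨ω'_λ, ω_φ⟩` for `λ` a weight and `φ` in the root lattice. -/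
noncomputable def pairWQ (r s : ℂ) {n : ℕ} (lam : Fin (n+1) → ℤ)
    (φ : Fin (n+1) → ℤ) : ℂ :=
  ∏ i : Fin (n+1), (pgW r s lam i) ^ (φ i)

/-- `ϱ^{λ,0}(ω'_η ω_φ) = ϱ^λ(ω'_η ω_φ) = ⟨ω'_η, ω_λ⟩⁻¹ ⟨ω'_λ, ω_φ⟩`. -/
noncomputable def rhoLam (r s : ℂ) {n : ℕ} (lam η φ : Fin (n+1) → ℤ) : ℂ :=
  (pairQW r s η lam)⁻¹ * pairWQ r s lam φ

/-- The inner product `(η, μ)` of `η = Σ η_i α_i` in the root lattice with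
`μ = Σ μ_i ϖ_i` in the weight lattice: `(α_i, ϖ_i) = (α_i,α_i)/2`. -/
def ipQW {n : ℕ} (η μ : Fin (n+1) → ℤ) : ℚ :=
  ∑ i : Fin (n+1), (η i : ℚ) * (μ i : ℚ) * (if i ≠ Fin.last n then 1 else 1/2)

/-- `ϱ^{λ,μ}(ω'_η ω_φ) = ϱ^λ(ω'_η ω_φ) · (rs⁻¹)^{(η+φ,μ)}`. -/
noncomputable def rhoLM (r s : ℂ) {n : ℕ} (lam μ η φ : Fin (n+1) → ℤ) : ℂ :=
  rhoLam r s lam η φ * zq (r * s⁻¹) (ipQW (η + φ) μ)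

/-! Squaring clears the half-integer exponents, so the square of every value of `ϱ^{λ,μ}` is a
monomial `r^k s^l`, and genericity of `(r, s)` forces its `r`-exponent `k` to vanish. For `λ = 0`
this exponent is `2 (η + φ, μ)`, giving `η + φ = 0`; for `μ = 0` and `φ = -η` an Abel summation
identifies it with `-4 (η, λ)`, giving `η = 0`. Both times one concludes by testing against the
fundamental weights, on which `(η, ϖ_j) = η_j (α_j, α_j) / 2 ≠ 0` unless `η_j = 0`. -/

def HasRExponent (r s z : ℂ) (k : ℤ) : Prop := ∃ l : ℤ, z = r ^ k * s ^ l

lemma hasRExponent_left {r s : ℂ} : HasRExponent r s r 1 := ⟨0, by simp⟩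

lemma hasRExponent_right {r s : ℂ} : HasRExponent r s s 0 := ⟨1, by simp⟩

namespace HasRExponent

variable {r s z w : ℂ} {k m : ℤ}

lemma ne_zero (hr : r ≠ 0) (hs : s ≠ 0) (hz : HasRExponent r s z k) : z ≠ 0 := by
  obtain ⟨l, rfl⟩ := hz
  exact mul_ne_zero (zpow_ne_zero _ hr) (zpow_ne_zero _ hs)

lemma mul (hr : r ≠ 0) (hs : s ≠ 0) (hz : HasRExponent r s z k) (hw : HasRExponent r s w m) :
    HasRExponent r s (z * w) (k + m) := by
  obtain ⟨l, rfl⟩ := hz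
  obtain ⟨l', rfl⟩ := hw
  exact ⟨l + l', by rw [zpow_add₀ hr, zpow_add₀ hs]; ring⟩

lemma inv (hz : HasRExponent r s z k) : HasRExponent r s z⁻¹ (-k) := by
  obtain ⟨l, rfl⟩ := hz
  exact ⟨-l, by rw [mul_inv, zpow_neg, zpow_neg]⟩

lemma zpow (hz : HasRExponent r s z k) (m : ℤ) : HasRExponent r s (z ^ m) (k * m) := by
  obtain ⟨l, rfl⟩ := hz
  exact ⟨l * m, by rw [mul_zpow, zpow_mul, zpow_mul]⟩

lemma prod (hr : r ≠ 0) (hs : s ≠ 0) {ι : Type*} (t : Finset ι) {f : ι → ℂ} {k : ι → ℤ}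
    (h : ∀ i ∈ t, HasRExponent r s (f i) (k i)) :
    HasRExponent r s (∏ i ∈ t, f i) (∑ i ∈ t, k i) := by
  classical
  induction t using Finset.induction_on with
  | empty => exact ⟨0, by simp⟩
  | insert a t ha ih =>
    rw [prod_insert ha, sum_insert ha]
    exact (h a (mem_insert_self a t)).mul hr hs (ih fun i hi => h i (mem_insert_of_mem hi))

lemma eq_zero_of_eq_one (hrs : ∀ k l : ℤ, r ^ k * s ^ l = 1 → k = 0 ∧ l = 0)
    (hz : HasRExponent r s z k) (h1 : z = 1) : k = 0 := by
  obtain ⟨l, rfl⟩ := hz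
  exact (hrs k l h1).1

end HasRExponent

lemma zq_intCast (z : ℂ) (m : ℤ) : zq z m = z ^ m := by
  rw [zq, Rat.cast_intCast]
  exact Complex.cpow_intCast z m

lemma zq_sq {z : ℂ} (hz : z ≠ 0) (q : ℚ) : zq z q ^ 2 = zq z (2 * q) := by
  rw [zq, zq, sq, ← Complex.cpow_add _ _ hz]
  push_cast
  ring_nf

lemma HasRExponent.zq_sq {r s z : ℂ} {k m : ℤ} {q : ℚ} (hr : r ≠ 0) (hs : s ≠ 0)
    (hz : HasRExponent r s z k) (hq : 2 * q = m) : HasRExponent r s (zq z q ^ 2) (k * m) := by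
  rw [_root_.zq_sq (hz.ne_zero hr hs), hq, zq_intCast]
  exact hz.zpow m

section Lattice

variable {n : ℕ}

def twiceEpsW (lam : Fin (n+1) → ℤ) (j : Fin (n+1)) : ℤ :=
  2 * ∑ i ∈ univ.filter (fun i => j ≤ i ∧ i ≠ Fin.last n), lam i + lam (Fin.last n)

def twiceAlphaCoordW (lam : Fin (n+1) → ℤ) (j : Fin (n+1)) : ℤ :=
  ∑ i ∈ univ.filter (· ≤ j), twiceEpsW lam i

def twiceIpQW (η μ : Fin (n+1) → ℤ) : ℤ :=
  ∑ i : Fin (n+1), η i * μ i * (if i ≠ Fin.last n then 2 else 1)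

lemma cast_twiceEpsW (lam : Fin (n+1) → ℤ) (j : Fin (n+1)) :
    (twiceEpsW lam j : ℚ) = 2 * epsW lam j := by
  simp only [twiceEpsW, epsW]
  push_cast
  ring

lemma cast_twiceAlphaCoordW (lam : Fin (n+1) → ℤ) (j : Fin (n+1)) :
    (twiceAlphaCoordW lam j : ℚ) = 2 * alphaCoordW lam j := by
  simp only [twiceAlphaCoordW, alphaCoordW, Int.cast_sum, cast_twiceEpsW, mul_sum]

lemma cast_twiceIpQW (η μ : Fin (n+1) → ℤ) : (twiceIpQW η μ : ℚ) = 2 * ipQW η μ := by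
  simp only [twiceIpQW, ipQW, Int.cast_sum, mul_sum]
  refine sum_congr rfl fun i _ => ?_
  split_ifs <;> push_cast <;> ring

lemma twiceIpQW_single (ν : Fin (n+1) → ℤ) (j : Fin (n+1)) :
    twiceIpQW ν (Pi.single j 1) = ν j * (if j ≠ Fin.last n then 2 else 1) := by
  rw [twiceIpQW, sum_eq_single j (fun i _ hij => by simp [hij]) (by simp)]
  simp

lemma eq_zero_of_forall_twiceIpQW_eq_zero {ν : Fin (n+1) → ℤ}
    (h : ∀ μ, twiceIpQW ν μ = 0) : ν = 0 := by
  funext j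
  have hj := h (Pi.single j 1)
  rw [twiceIpQW_single] at hj
  split_ifs at hj <;> simpa using hj

lemma sum_filter_eq_add_sum_filter {ι M : Type*} [Fintype ι] [DecidableEq ι] [AddCommMonoid M]
    {P Q : ι → Prop} [DecidablePred P] [DecidablePred Q] (a : ι)
    (hPQ : ∀ i, P i ↔ i = a ∨ Q i) (ha : ¬ Q a) (f : ι → M) :
    ∑ i ∈ univ.filter P, f i = f a + ∑ i ∈ univ.filter Q, f i := by
  have hfilter : univ.filter P = insert a (univ.filter Q) := by
    ext i
    simp [hPQ]
  rw [hfilter, sum_insert (by simpa using ha)]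

lemma twiceEpsW_castSucc (lam : Fin (n+1) → ℤ) (k : Fin n) :
    twiceEpsW lam k.castSucc = 2 * lam k.castSucc + twiceEpsW lam k.succ := by
  rw [twiceEpsW, twiceEpsW, sum_filter_eq_add_sum_filter
    (Q := fun i => k.succ ≤ i ∧ i ≠ Fin.last n) k.castSucc]
  · ring
  · intro i
    simp only [Fin.le_def, Fin.ext_iff, Fin.val_castSucc, Fin.val_succ, Fin.val_last, ne_eq]
    omega
  · simp [Fin.le_def]

lemma twiceEpsW_last (lam : Fin (n+1) → ℤ) : twiceEpsW lam (Fin.last n) = lam (Fin.last n) := by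
  rw [twiceEpsW, sum_eq_zero fun i hi => absurd (le_antisymm (Fin.le_last i)
    (mem_filter.mp hi).2.1) (mem_filter.mp hi).2.2]
  ring

lemma twiceAlphaCoordW_succ (lam : Fin (n+1) → ℤ) (k : Fin n) :
    twiceAlphaCoordW lam k.succ = twiceEpsW lam k.succ + twiceAlphaCoordW lam k.castSucc := by
  rw [twiceAlphaCoordW, twiceAlphaCoordW,
    sum_filter_eq_add_sum_filter (Q := (· ≤ k.castSucc)) k.succ]
  · intro i
    simp only [Fin.le_def, Fin.ext_iff, Fin.val_castSucc, Fin.val_succ]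
    omega
  · simp [Fin.le_def]

lemma epsQ_zero (ζ : Fin (n+1) → ℤ) : epsQ ζ 0 = ζ 0 := by
  simp [epsQ]

lemma epsQ_succ (ζ : Fin (n+1) → ℤ) (k : Fin n) : epsQ ζ k.succ = ζ k.succ - ζ k.castSucc := by
  rw [epsQ, dif_pos (by simp)]
  rfl

/-- Abel summation against `(ε_i, η) = η_i - η_{i-1}` leaves `Σ η_i (ε_i - ε_{i+1}, λ) = (η, λ)`. -/
lemma sum_mul_twiceEpsW_add_sum_twiceAlphaCoordW_mul_epsQ (η lam : Fin (n+1) → ℤ) :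
    ∑ i, twiceEpsW lam i * η i + ∑ i, epsQ η i * twiceAlphaCoordW lam i
      - η (Fin.last n) * twiceAlphaCoordW lam (Fin.last n) = twiceIpQW η lam := by
  have hAbel : ∑ i, epsQ η i * twiceAlphaCoordW lam i
      = η (Fin.last n) * twiceAlphaCoordW lam (Fin.last n)
        - ∑ k : Fin n, twiceEpsW lam k.succ * η k.castSucc := by
    have h1 := Fin.sum_univ_succ fun i => epsQ η i * twiceAlphaCoordW lam i
    have h2 := Fin.sum_univ_succ fun i => η i * twiceAlphaCoordW lam i
    have h3 := Fin.sum_univ_castSucc fun i => η i * twiceAlphaCoordW lam i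
    simp only [epsQ_zero, epsQ_succ, twiceAlphaCoordW_succ] at h1 h2 h3
    have h4 : ∑ k : Fin n, (η k.succ - η k.castSucc)
        * (twiceEpsW lam k.succ + twiceAlphaCoordW lam k.castSucc)
        = ∑ k : Fin n, η k.succ * (twiceEpsW lam k.succ + twiceAlphaCoordW lam k.castSucc)
          - ∑ k : Fin n, twiceEpsW lam k.succ * η k.castSucc
          - ∑ k : Fin n, η k.castSucc * twiceAlphaCoordW lam k.castSucc := by
      rw [← sum_sub_distrib, ← sum_sub_distrib]
      exact sum_congr rfl fun k _ => by ring
    linarith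
  have hη : ∑ i, twiceEpsW lam i * η i = ∑ k : Fin n, twiceEpsW lam k.succ * η k.castSucc
      + ∑ k : Fin n, η k.castSucc * lam k.castSucc * 2 + η (Fin.last n) * lam (Fin.last n) := by
    rw [Fin.sum_univ_castSucc, ← sum_add_distrib, twiceEpsW_last, mul_comm (lam _)]
    simp only [twiceEpsW_castSucc]
    congr 1
    exact sum_congr rfl fun k _ => by ring
  have hip : twiceIpQW η lam = ∑ k : Fin n, η k.castSucc * lam k.castSucc * 2
      + η (Fin.last n) * lam (Fin.last n) := by
    simp [twiceIpQW, Fin.sum_univ_castSucc, Fin.castSucc_ne_last]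
  rw [hAbel, hη, hip]
  ring

end Lattice

section Exponents

variable {r s : ℂ} {n : ℕ}

lemma hasRExponent_pgQ (hr : r ≠ 0) (hs : s ≠ 0) (η : Fin (n+1) → ℤ) (i : Fin (n+1)) :
    HasRExponent r s (pgQ r s η i) (2 * epsQ η i - if i = Fin.last n then η i else 0) := by
  have hlast : (i : ℕ) + 1 < n + 1 ↔ i ≠ Fin.last n := by
    rw [ne_eq, Fin.ext_iff, Fin.val_last]
    omega
  rw [pgQ]
  split_ifs with h hi hi
  · exact absurd hi (hlast.mp h)
  · exact ⟨_, by rw [sub_zero]⟩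
  · convert (hasRExponent_left.zpow _).mul hr hs
      ((hasRExponent_left.mul hr hs hasRExponent_right).zpow (-η i)) using 1
    ring
  · exact absurd (hlast.mpr hi) h

lemma hasRExponent_pgW_sq (hr : r ≠ 0) (hs : s ≠ 0) (lam : Fin (n+1) → ℤ) (i : Fin (n+1)) :
    HasRExponent r s (pgW r s lam i ^ 2)
      (2 * twiceEpsW lam i - if i = Fin.last n then twiceAlphaCoordW lam i else 0) := by
  have hr2 : HasRExponent r s (zq r (2 * epsW lam i) ^ 2) (1 * (2 * twiceEpsW lam i)) :=
    hasRExponent_left.zq_sq hr hs (by push_cast [cast_twiceEpsW]; ring)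
  by_cases hi : i = Fin.last n
  · subst hi
    rw [pgW, if_neg (not_not.mpr rfl), if_pos rfl, mul_pow]
    convert hr2.mul hr hs ((hasRExponent_left.mul hr hs hasRExponent_right).zq_sq hr hs
      (q := -alphaCoordW lam (Fin.last n)) (m := -twiceAlphaCoordW lam (Fin.last n))
      (by push_cast [cast_twiceAlphaCoordW]; ring)) using 1
    ring
  · rw [pgW, if_pos hi, if_neg hi, mul_pow]
    convert hr2.mul hr hs (hasRExponent_right.zq_sq hr hs (q := 2 * epsW lam (i + 1))
      (m := 2 * twiceEpsW lam (i + 1)) (by push_cast [cast_twiceEpsW]; ring)) using 1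
    ring

lemma hasRExponent_pairWQ_sq (hr : r ≠ 0) (hs : s ≠ 0) (lam φ : Fin (n+1) → ℤ) :
    HasRExponent r s (pairWQ r s lam φ ^ 2) (∑ i, 2 * twiceEpsW lam i * φ i
      - twiceAlphaCoordW lam (Fin.last n) * φ (Fin.last n)) := by
  rw [pairWQ, ← prod_pow]
  convert HasRExponent.prod hr hs univ fun i _ =>
    (hasRExponent_pgW_sq hr hs lam i).zpow (φ i) using 1
  · simp only [← zpow_natCast, ← zpow_mul, mul_comm]
  · simp only [sub_mul, sum_sub_distrib, ite_mul, zero_mul, sum_ite_eq', mem_univ, if_true]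

lemma hasRExponent_pairQW_sq (hr : r ≠ 0) (hs : s ≠ 0) (η lam : Fin (n+1) → ℤ) :
    HasRExponent r s (pairQW r s η lam ^ 2) (∑ i, 2 * epsQ η i * twiceAlphaCoordW lam i
      - η (Fin.last n) * twiceAlphaCoordW lam (Fin.last n)) := by
  rw [pairQW, ← prod_pow]
  convert HasRExponent.prod hr hs univ fun i _ =>
    (hasRExponent_pgQ hr hs η i).zq_sq hr hs (cast_twiceAlphaCoordW lam i).symm using 1
  simp only [sub_mul, sum_sub_distrib, ite_mul, zero_mul, sum_ite_eq', mem_univ, if_true]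

lemma hasRExponent_rhoLam_neg_sq (hr : r ≠ 0) (hs : s ≠ 0) (lam η : Fin (n+1) → ℤ) :
    HasRExponent r s (rhoLam r s lam η (-η) ^ 2) (-2 * twiceIpQW η lam) := by
  rw [rhoLam, mul_pow, inv_pow]
  convert (hasRExponent_pairQW_sq hr hs η lam).inv.mul hr hs
    (hasRExponent_pairWQ_sq hr hs lam (-η)) using 1
  rw [← sum_mul_twiceEpsW_add_sum_twiceAlphaCoordW_mul_epsQ]
  simp only [Pi.neg_apply, mul_neg, sum_neg_distrib, mul_assoc, ← mul_sum]
  ring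

lemma rhoLam_zero_left (r s : ℂ) (η φ : Fin (n+1) → ℤ) : rhoLam r s 0 η φ = 1 := by
  simp [rhoLam, pairQW, pairWQ, pgW, epsW, alphaCoordW, zq]

end Exponents

/-- Lemma 4.1: if `ϱ^{λ,μ}(ω'_η ω_φ) = 1` for all weights `λ, μ`, then
`η = 0` and `φ = 0`. -/
theorem stmt4 (n : ℕ) (r s : ℂ) (hr : r ≠ 0) (hs : s ≠ 0)
    (hrs : ∀ k l : ℤ, r ^ k * s ^ l = 1 → k = 0 ∧ l = 0)
    (η φ : Fin (n+1) → ℤ)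
    (h : ∀ lam μ : Fin (n+1) → ℤ, rhoLM r s lam μ η φ = 1) :
    η = 0 ∧ φ = 0 := by
  have hsum : η + φ = 0 := by
    refine eq_zero_of_forall_twiceIpQW_eq_zero fun μ => ?_
    have hμ : HasRExponent r s (rhoLM r s 0 μ η φ ^ 2) (1 * twiceIpQW (η + φ) μ) := by
      rw [rhoLM, rhoLam_zero_left, one_mul]
      exact (hasRExponent_left.mul hr hs hasRExponent_right.inv).zq_sq hr hs
        (cast_twiceIpQW _ _).symm
    simpa using hμ.eq_zero_of_eq_one hrs (by rw [h, one_pow])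
  obtain rfl : φ = -η := eq_neg_of_add_eq_zero_right hsum
  have hη : η = 0 := by
    refine eq_zero_of_forall_twiceIpQW_eq_zero fun lam => ?_
    have hlam := hasRExponent_rhoLam_neg_sq hr hs lam η
    have hρ : rhoLam r s lam η (-η) = 1 := by simpa [rhoLM, ipQW, zq] using h lam 0
    simpa using hlam.eq_zero_of_eq_one hrs (by rw [hρ, one_pow])
  exact ⟨hη, by rw [hη, neg_zero]⟩
end

section
/- Let H be a Hopf algebra over a field K with bijective antipode S, and let ⟨·,·⟩ : H × H → K be an ad-invariant bilinear form, meaning ⟨ad(a)b, c⟩ = ⟨b, ad(S(a))c⟩ for all a, b, c ∈ H. Suppose f ∈ H* satisfies f(ad(x)u) = ε(x) f(u) for all x, u ∈ H (i.e., f is ad-invariant), and suppose z ∈ H satisfies ⟨z, v⟩ = f(v) for all v ∈ H, with the form nondegenerate. Then z is central in H. -/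
open TensorProduct

/-- The left adjoint action `ad(x)z = Σ x₍₁₎ z S(x₍₂₎)` of a Hopf algebra on
itself. -/
noncomputable def hopfAd (K : Type*) [CommRing K] (H : Type*) [Ring H]
    [HopfAlgebra K H] (x z : H) : H :=
  LinearMap.mul' K H
    (TensorProduct.map (LinearMap.mulRight K z) (HopfAlgebra.antipode (R := K))
      (Coalgebra.comul (R := K) x))

lemma counit_antipode_aux (K : Type*) [CommRing K] (H : Type*) [Ring H]
    [HopfAlgebra K H] (a : H) :
    Coalgebra.counit (R := K) (HopfAlgebra.antipode (R := K) a) =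
      Coalgebra.counit (R := K) a := by
  classical
  set r := Coalgebra.Repr.arbitrary K a with hr
  have h1 : ∑ i ∈ r.index,
      (Coalgebra.counit (R := K) (r.right i)) • r.left i = a := by
    have := congrArg (TensorProduct.rid K H) (Coalgebra.sum_tmul_counit_eq (R := K) r)
    simp only [map_sum, TensorProduct.rid_tmul] at this
    simpa using this
  have h2 : ∑ i ∈ r.index,
      (Coalgebra.counit (R := K) (HopfAlgebra.antipode (R := K) (r.left i))) *
        Coalgebra.counit (R := K) (r.right i) = Coalgebra.counit (R := K) a := by
    have := congrArg (Coalgebra.counit (R := K))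
      (HopfAlgebra.sum_antipode_mul_eq_algebraMap_counit (R := K) r)
    simp only [map_sum, Bialgebra.counit_mul, Bialgebra.counit_algebraMap] at this
    exact this
  calc Coalgebra.counit (R := K) (HopfAlgebra.antipode (R := K) a)
      = Coalgebra.counit (R := K) (HopfAlgebra.antipode (R := K)
          (∑ i ∈ r.index, (Coalgebra.counit (R := K) (r.right i)) • r.left i)) := by
        rw [h1]
    _ = ∑ i ∈ r.index, (Coalgebra.counit (R := K) (HopfAlgebra.antipode (R := K) (r.left i))) *
          Coalgebra.counit (R := K) (r.right i) := by
        rw [map_sum, map_sum]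
        refine Finset.sum_congr rfl fun i _ => ?_
        rw [map_smul, map_smul, smul_eq_mul, mul_comm]
    _ = Coalgebra.counit (R := K) a := h2

/-- Theorem 5.6 (abstract form): let `B` be an ad-invariant nondegenerate
bilinear form on a Hopf algebra `H` in which ad-invariant elements are central
(Lemma 5.1), let `f ∈ H*` be ad-invariant, and let `z` represent `f` via `B`.
Then `z` is central. -/
theorem stmt15 (K : Type*) [Field K] (H : Type*) [Ring H] [HopfAlgebra K H]
    (hS : Function.Bijective (HopfAlgebra.antipode (R := K) (A := H)))
    (B : H →ₗ[K] H →ₗ[K] K)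
    (hinv : ∀ a b c : H,
      B (hopfAd K H a b) c = B b (hopfAd K H (HopfAlgebra.antipode (R := K) a) c))
    (hnondeg : ∀ u : H, (∀ v : H, B u v = 0) → u = 0)
    (hcent : ∀ w : H,
      (∀ x : H, hopfAd K H x w = (Coalgebra.counit (R := K) x) • w) →
      ∀ x : H, w * x = x * w)
    (f : H →ₗ[K] K)
    (hf : ∀ x u : H, f (hopfAd K H x u) = (Coalgebra.counit (R := K) x) * f u)
    (z : H) (hz : ∀ v : H, B z v = f v) :
    ∀ x : H, z * x = x * z := by
  have key : ∀ x : H, hopfAd K H x z = (Coalgebra.counit (R := K) x) • z := by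
    intro x
    have h0 : hopfAd K H x z - (Coalgebra.counit (R := K) x) • z = 0 := by
      apply hnondeg
      intro v
      have h1 : B (hopfAd K H x z) v = (Coalgebra.counit (R := K) x) * f v := by
        rw [hinv, hz, hf, counit_antipode_aux]
      rw [map_sub, LinearMap.sub_apply, map_smul, LinearMap.smul_apply, h1, hz,
        smul_eq_mul, sub_self]
    have := sub_eq_zero.mp h0
    exact this
  intro x
  exact hcent z key x
end
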